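/- Let N_r ≥ 2 be an integer, set n = 2N_r, and define G_{n,k}(u) = ∑_{i=0}^{k−1} [n!·C(k−1,i)·(−1)^i / ((n−k+i+1)·(n−k)!·(k−1)!)] · u^{n−k+i+1}. Define Q_SRS(u) = [(N_r−1)/(2N_r−1)]·G_{n,2}(u) + [(N_r+1)/(2(2N_r−1))]·G_{n,3}(u) + ∑_{k=4}^{N_r+1} [2·N_r·C(N_r,k−1)/((2N_r−(k−1))·C(2N_r,k−1))]·G_{n,k}(u) + ∑_{k=4}^{N_r+2} [2·(N_r−1)·C(N_r,k−2)/((2N_r−(k−2))·(2N_r−(k−1))·C(2N_r,k−2))]·G_{n,k}(u). Then lim_{u→0⁺} Q_SRS(u)/u^{N_r−1} = 2/(N_r+1). -/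

import Mathlib

/-!
`G_{n,k}(u) = C(n, k-1) u^{n-k+1} + O(u^{n-k+2})` as `u → 0`, since the leading coefficient
`n! / ((n-k+1) (n-k)! (k-1)!)` is a binomial coefficient. With `n = 2 Nr`, every `G_{n,k}` occurring
in `Q_SRS` with `k ≤ Nr + 1` is `o(u^{Nr-1})`, so only the term `k = Nr + 2` of the last sum survives,
with limit `2 (Nr-1) / (Nr (Nr-1) C(2Nr, Nr)) · C(2Nr, Nr+1) = 2 / (Nr + 1)`.
-/

/-- `G n k u = ∑_{i=0}^{k−1} n!·C(k−1,i)·(−1)^i / ((n−k+i+1)(n−k)!(k−1)!) · u^{n−k+i+1}`,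
the CDF of the `k`-th largest of `n` i.i.d. random variables expressed as a
polynomial in the common per-entry CDF value `u`. -/
noncomputable def orderCDF (n k : ℕ) (u : ℝ) : ℝ :=
  ∑ i ∈ Finset.range k,
    ((n.factorial : ℝ) * (((k - 1).choose i : ℝ)) * (-1 : ℝ) ^ i
        / (((n : ℝ) - (k : ℝ) + (i : ℝ) + 1) * ((n - k).factorial : ℝ)
            * ((k - 1).factorial : ℝ)))
      * u ^ (n - k + i + 1)

open Filter Finset Topology

noncomputable def orderCDFCoeff (n k i : ℕ) : ℝ :=
  (n.factorial : ℝ) * (((k - 1).choose i : ℝ)) * (-1 : ℝ) ^ i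
    / (((n : ℝ) - (k : ℝ) + (i : ℝ) + 1) * ((n - k).factorial : ℝ) * ((k - 1).factorial : ℝ))

theorem orderCDF_eq_sum (n k : ℕ) (u : ℝ) :
    orderCDF n k u = ∑ i ∈ range k, orderCDFCoeff n k i * u ^ (n - k + i + 1) :=
  rfl

theorem orderCDFCoeff_zero {n k : ℕ} (hk : 1 ≤ k) (hkn : k ≤ n) :
    orderCDFCoeff n k 0 = n.choose (k - 1) := by
  have hsub : n - (k - 1) = n - k + 1 := by omega
  rw [orderCDFCoeff, Nat.cast_choose ℝ (by omega : k - 1 ≤ n), hsub, Nat.factorial_succ]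
  push_cast [Nat.cast_sub hkn, Nat.choose_zero_right]
  ring

theorem tendsto_pow_div_pow_nhdsGT_zero {a m : ℕ} (h : m ≤ a) :
    Tendsto (fun u : ℝ => u ^ a / u ^ m) (𝓝[>] 0) (𝓝 (0 ^ (a - m))) := by
  refine (((continuous_pow (a - m)).tendsto 0).mono_left nhdsWithin_le_nhds).congr' ?_
  filter_upwards [self_mem_nhdsWithin] with u hu
  exact (pow_sub₀ u hu.ne' h).trans (div_eq_mul_inv _ _).symm

theorem tendsto_orderCDF_div_pow {n k m : ℕ} (hm : m ≤ n - k + 1) :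
    Tendsto (fun u : ℝ => orderCDF n k u / u ^ m) (𝓝[>] 0)
      (𝓝 (∑ i ∈ range k, orderCDFCoeff n k i * 0 ^ (n - k + i + 1 - m))) := by
  simp only [orderCDF_eq_sum, sum_div, mul_div_assoc]
  exact tendsto_finsetSum _ fun i _ =>
    (tendsto_pow_div_pow_nhdsGT_zero (by omega)).const_mul _

theorem tendsto_orderCDF_div_pow_of_lt {n k m : ℕ} (hm : m < n - k + 1) :
    Tendsto (fun u : ℝ => orderCDF n k u / u ^ m) (𝓝[>] 0) (𝓝 0) := by
  convert tendsto_orderCDF_div_pow hm.le using 2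
  exact (sum_eq_zero fun i _ => by rw [zero_pow (by omega), mul_zero]).symm

theorem tendsto_orderCDF_div_pow_self {n k : ℕ} (hk : 1 ≤ k) (hkn : k ≤ n) :
    Tendsto (fun u : ℝ => orderCDF n k u / u ^ (n - k + 1)) (𝓝[>] 0)
      (𝓝 (n.choose (k - 1))) := by
  convert tendsto_orderCDF_div_pow le_rfl using 2
  obtain ⟨j, rfl⟩ : ∃ j, k = j + 1 := ⟨k - 1, by omega⟩
  rw [sum_range_succ', sum_eq_zero fun i _ => by rw [zero_pow (by omega), mul_zero],
    zero_add, Nat.sub_self, pow_zero, mul_one, orderCDFCoeff_zero hk hkn]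

theorem srs_top_weight_mul_choose {Nr : ℕ} (hNr : 2 ≤ Nr) :
    (2 * ((Nr : ℝ) - 1) * (Nr.choose (Nr + 2 - 2) : ℝ))
        / ((2 * (Nr : ℝ) - (((Nr + 2 : ℕ) : ℝ) - 2)) * (2 * (Nr : ℝ) - (((Nr + 2 : ℕ) : ℝ) - 1))
          * (((2 * Nr).choose (Nr + 2 - 2) : ℝ)))
      * ((2 * Nr).choose (Nr + 2 - 1) : ℝ) = 2 / ((Nr : ℝ) + 1) := by
  have hratio : ((2 * Nr).choose (Nr + 1) : ℝ) * (Nr + 1) = (2 * Nr).choose Nr * Nr := by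
    have h := Nat.choose_succ_right_eq (2 * Nr) Nr
    rw [show 2 * Nr - Nr = Nr by omega] at h
    exact_mod_cast h
  have hchoose : ((2 * Nr).choose Nr : ℝ) ≠ 0 := mod_cast (Nat.choose_pos (by omega)).ne'
  have hNrR : (2 : ℝ) ≤ Nr := mod_cast hNr
  simp only [Nat.add_sub_cancel, show Nr + 2 - 1 = Nr + 1 by omega, Nat.choose_self]
  push_cast
  rw [show 2 * (Nr : ℝ) - ((Nr : ℝ) + 2 - 2) = Nr by ring,
    show 2 * (Nr : ℝ) - ((Nr : ℝ) + 2 - 1) = Nr - 1 by ring]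
  have hNr1 : (Nr : ℝ) - 1 ≠ 0 := by linarith
  have hNr0 : (Nr : ℝ) ≠ 0 := by linarith
  have hNr2 : (Nr : ℝ) + 1 ≠ 0 := by linarith
  field_simp
  linear_combination hratio

theorem tendsto_orderCDF_two_mul_div_pow {Nr k : ℕ} (hNr : 2 ≤ Nr) (hk : k ≤ Nr + 2) :
    Tendsto (fun u : ℝ => orderCDF (2 * Nr) k u / u ^ (Nr - 1)) (𝓝[>] 0)
      (𝓝 (if k = Nr + 2 then ((2 * Nr).choose (Nr + 2 - 1) : ℝ) else 0)) := by
  split_ifs with htop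
  · subst htop
    convert tendsto_orderCDF_div_pow_self (n := 2 * Nr) (k := Nr + 2) (by omega) (by omega)
      using 4
    omega
  · exact tendsto_orderCDF_div_pow_of_lt (by omega)

/-- For `Nr ≥ 2`, the two-user SRS outage bound
`Q_SRS(u) = (Nr−1)/(2Nr−1)·G_{2Nr,2}(u) + (Nr+1)/(2(2Nr−1))·G_{2Nr,3}(u)
  + ∑_{k=4}^{Nr+1} 2·Nr·C(Nr,k−1)/((2Nr−(k−1))·C(2Nr,k−1))·G_{2Nr,k}(u)
  + ∑_{k=4}^{Nr+2} 2·(Nr−1)·C(Nr,k−2)/((2Nr−(k−2))·(2Nr−(k−1))·C(2Nr,k−2))·G_{2Nr,k}(u)`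
satisfies `lim_{u→0⁺} Q_SRS(u)/u^{Nr−1} = 2/(Nr+1)`. -/
theorem SRS_outage_bound_limit (Nr : ℕ) (hNr : 2 ≤ Nr) :
    Filter.Tendsto
      (fun u : ℝ =>
        (((Nr : ℝ) - 1) / (2 * (Nr : ℝ) - 1) * orderCDF (2 * Nr) 2 u
          + ((Nr : ℝ) + 1) / (2 * (2 * (Nr : ℝ) - 1)) * orderCDF (2 * Nr) 3 u
          + ∑ k ∈ Finset.Icc 4 (Nr + 1),
              (2 * (Nr : ℝ) * (Nr.choose (k - 1) : ℝ))
                / ((2 * (Nr : ℝ) - ((k : ℝ) - 1)) * (((2 * Nr).choose (k - 1) : ℝ)))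
                * orderCDF (2 * Nr) k u
          + ∑ k ∈ Finset.Icc 4 (Nr + 2),
              (2 * ((Nr : ℝ) - 1) * (Nr.choose (k - 2) : ℝ))
                / ((2 * (Nr : ℝ) - ((k : ℝ) - 2)) * (2 * (Nr : ℝ) - ((k : ℝ) - 1))
                    * (((2 * Nr).choose (k - 2) : ℝ)))
                * orderCDF (2 * Nr) k u) / u ^ (Nr - 1))
      (nhdsWithin 0 (Set.Ioi 0)) (nhds (2 / ((Nr : ℝ) + 1))) := by
  have hterm : ∀ (c : ℝ) (k : ℕ), k ≤ Nr + 2 →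
      Tendsto (fun u : ℝ => c * orderCDF (2 * Nr) k u / u ^ (Nr - 1)) (𝓝[>] 0)
        (𝓝 (c * if k = Nr + 2 then ((2 * Nr).choose (Nr + 2 - 1) : ℝ) else 0)) := by
    intro c k hk
    simpa only [mul_div_assoc] using (tendsto_orderCDF_two_mul_div_pow hNr hk).const_mul c
  have hsum : ∀ (s : Finset ℕ) (w : ℕ → ℝ), (∀ k ∈ s, k ≤ Nr + 2) →
      Tendsto (fun u : ℝ => ∑ k ∈ s, w k * orderCDF (2 * Nr) k u / u ^ (Nr - 1)) (𝓝[>] 0)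
        (𝓝 (∑ k ∈ s, w k * if k = Nr + 2 then ((2 * Nr).choose (Nr + 2 - 1) : ℝ) else 0)) :=
    fun s w hs => tendsto_finsetSum s fun k hk => hterm (w k) k (hs k hk)
  simp only [add_div, sum_div]
  convert ((hterm _ 2 (by omega)).add (hterm _ 3 (by omega))).add
    (hsum (Icc 4 (Nr + 1)) _ fun k hk => by rw [mem_Icc] at hk; omega) |>.add
    (hsum (Icc 4 (Nr + 2)) _ fun k hk => by rw [mem_Icc] at hk; omega) using 2
  simp only [mul_ite, mul_zero, sum_ite_eq', mem_Icc]
  rw [if_neg (by omega), if_neg (by omega), if_neg (by omega), if_pos (by omega),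
    srs_top_weight_mul_choose hNr]
  ring
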